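/- arXiv:2302.14843 — 3 statements merged into one kernel-verified Lean document; each statement's English description precedes it below -/
import Mathlib

section
/- Fix T ∈ ℕ, C > 0, and nonnegative reals m_1, …, m_T. Define w_T = 1/(C + Σ_{i=1}^T m_i) and, for 1 ≤ t ≤ T, w_{t-1} = w_t + m_t w_t². Then for every 0 ≤ t ≤ T, w_t ≤ 1/(C + Σ_{i=1}^t m_i). -/
open Finset

theorem backward_weights_upper_bound
    (T : ℕ) (C : ℝ) (hC : 0 < C) (m : ℕ → ℝ) (hm : ∀ t, 0 ≤ m t)
    (w : ℕ → ℝ)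
    (hwT : w T = 1 / (C + ∑ i ∈ Finset.Icc 1 T, m i))
    (hrec : ∀ t, 1 ≤ t → t ≤ T → w (t - 1) = w t + m t * (w t) ^ 2) :
    ∀ t, t ≤ T → w t ≤ 1 / (C + ∑ i ∈ Finset.Icc 1 t, m i) := by
  have hS : ∀ t, 0 < C + ∑ i ∈ Finset.Icc 1 t, m i := by
    intro t
    have : 0 ≤ ∑ i ∈ Finset.Icc 1 t, m i := Finset.sum_nonneg fun i _ => hm i
    linarith
  have key : ∀ d t, t + d = T →
      0 ≤ w t ∧ w t ≤ 1 / (C + ∑ i ∈ Finset.Icc 1 t, m i) := by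
    intro d
    induction d with
    | zero =>
      intro t ht
      simp only [Nat.add_zero] at ht
      subst ht
      rw [hwT]
      exact ⟨le_of_lt (one_div_pos.mpr (hS _)), le_refl _⟩
    | succ d ih =>
      intro t ht
      obtain ⟨h0, h1⟩ := ih (t + 1) (by omega)
      have hle : t + 1 ≤ T := by omega
      have hw : w t = w (t + 1) + m (t + 1) * (w (t + 1)) ^ 2 := by
        simpa using hrec (t + 1) (by omega) hle
      have hmt := hm (t + 1)
      have hsum : (∑ i ∈ Finset.Icc 1 (t + 1), m i)
          = (∑ i ∈ Finset.Icc 1 t, m i) + m (t + 1) := by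
        rw [Finset.sum_Icc_succ_top (by omega)]
      have hapos : 0 < C + ∑ i ∈ Finset.Icc 1 t, m i := hS t
      have hbpos : 0 < C + ∑ i ∈ Finset.Icc 1 (t + 1), m i := hS (t + 1)
      set a := C + ∑ i ∈ Finset.Icc 1 t, m i with ha
      set b := C + ∑ i ∈ Finset.Icc 1 (t + 1), m i with hb
      have hba : b = a + m (t + 1) := by rw [ha, hb, hsum]; ring
      have h1' : w (t + 1) ≤ 1 / b := by
        exact h1
      constructor
      · rw [hw]; positivity
      · rw [hw]
        have step1 : w (t + 1) + m (t + 1) * (w (t + 1)) ^ 2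
            ≤ 1 / b + m (t + 1) * (1 / b) ^ 2 := by
          gcongr
        have step2 : 1 / b + m (t + 1) * (1 / b) ^ 2 ≤ 1 / a := by
          have heq : 1 / b + m (t + 1) * (1 / b) ^ 2 = (b + m (t + 1)) / b ^ 2 := by
            field_simp
          rw [heq, div_le_div_iff₀ (by positivity) hapos]
          nlinarith [sq_nonneg (m (t + 1))]
        linarith
  intro t ht
  exact (key (T - t) t (by omega)).2
end

section
/- Fix T ∈ ℕ, C > 0, and nonnegative reals m_1, …, m_T. Define w_T = 1/(C + Σ_{i=1}^T m_i) and w_{t-1} = w_t + m_t w_t² for 1 ≤ t ≤ T. If C = Σ_{i=1}^T m_i, then 1/(2C) ≤ w_t ≤ 1/C for all 0 ≤ t ≤ T; in particular all weights w_t lie within a factor 2 of each other. -/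
/-!
Since `x ↦ x + b x²` is increasing on `[0, ∞)`, the bound `w_t ≤ 1/(c + b)` propagates to
`w_{t-1} ≤ 1/(c + b) + b/(c + b)² ≤ 1/c` with `b = m_t`, the last step being
`c (c + 2b) ≤ (c + b)²`. Starting from `w_T = 1/(C + Σ m_i)`, backward induction gives
`w_t ≤ 1/(C + Σ_{i ≤ t} m_i) ≤ 1/C`, while `w_t ≥ w_T = 1/(2C)` because the weights only grow
as `t` decreases.
-/

open Finset

theorem add_mul_sq_le_one_div {a b x : ℝ} (ha : 0 < a) (hb : 0 ≤ b) (hx : 0 ≤ x)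
    (hxab : x ≤ 1 / (a + b)) : x + b * x ^ 2 ≤ 1 / a := by
  have hab : 0 < a + b := by positivity
  calc x + b * x ^ 2 ≤ 1 / (a + b) + b * (1 / (a + b)) ^ 2 := by gcongr
    _ = (a + 2 * b) / (a + b) ^ 2 := by field_simp; ring
    _ ≤ 1 / a := by
      rw [div_le_div_iff₀ (by positivity) ha]
      nlinarith [sq_nonneg b]

section BackwardRecursion

variable {T : ℕ} {m w : ℕ → ℝ}

theorem backward_step (hrec : ∀ t, 1 ≤ t → t ≤ T → w (t - 1) = w t + m t * w t ^ 2)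
    {k : ℕ} (hk : k < T) : w k = w (k + 1) + m (k + 1) * w (k + 1) ^ 2 :=
  hrec (k + 1) (by omega) hk

theorem le_backward_weight (hm : ∀ t, 0 ≤ m t)
    (hrec : ∀ t, 1 ≤ t → t ≤ T → w (t - 1) = w t + m t * w t ^ 2)
    {t : ℕ} (ht : t ≤ T) : w T ≤ w t := by
  induction ht using Nat.decreasingInduction with
  | self => rfl
  | of_succ k hk ih =>
    rw [backward_step hrec hk]
    exact ih.trans (le_add_of_nonneg_right (mul_nonneg (hm _) (sq_nonneg _)))

theorem backward_weight_le_one_div {c : ℝ} (hc : 0 < c) (hm : ∀ t, 0 ≤ m t)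
    (hrec : ∀ t, 1 ≤ t → t ≤ T → w (t - 1) = w t + m t * w t ^ 2)
    (hwT₀ : 0 ≤ w T) (hwT : w T ≤ 1 / (c + ∑ i ∈ Icc 1 T, m i))
    {t : ℕ} (ht : t ≤ T) : w t ≤ 1 / (c + ∑ i ∈ Icc 1 t, m i) := by
  induction ht using Nat.decreasingInduction with
  | self => exact hwT
  | of_succ k hk ih =>
    rw [backward_step hrec hk]
    rw [sum_Icc_succ_top (by omega), ← add_assoc] at ih
    exact add_mul_sq_le_one_div (add_pos_of_pos_of_nonneg hc (sum_nonneg fun i _ => hm i))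
      (hm (k + 1)) (hwT₀.trans (le_backward_weight hm hrec hk)) ih

end BackwardRecursion

theorem backward_weights_within_factor_two
    (T : ℕ) (C : ℝ) (hC : 0 < C) (m : ℕ → ℝ) (hm : ∀ t, 0 ≤ m t)
    (hCsum : C = ∑ i ∈ Finset.Icc 1 T, m i)
    (w : ℕ → ℝ)
    (hwT : w T = 1 / (C + ∑ i ∈ Finset.Icc 1 T, m i))
    (hrec : ∀ t, 1 ≤ t → t ≤ T → w (t - 1) = w t + m t * (w t) ^ 2) :
    ∀ t, t ≤ T → 1 / (2 * C) ≤ w t ∧ w t ≤ 1 / C := by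
  intro t ht
  have hwT' : w T = 1 / (2 * C) := by rw [hwT, ← hCsum, two_mul]
  have hwT₀ : 0 ≤ w T := by rw [hwT']; positivity
  refine ⟨hwT' ▸ le_backward_weight hm hrec ht, ?_⟩
  calc w t ≤ 1 / (C + ∑ i ∈ Icc 1 t, m i) :=
        backward_weight_le_one_div hC hm hrec hwT₀ hwT.le ht
    _ ≤ 1 / C :=
        one_div_le_one_div_of_le hC (le_add_of_nonneg_right (sum_nonneg fun i _ => hm i))
end

section
/- Let b_0 > 0, C ≥ 0, and nonnegative reals e_1, …, e_T. Suppose b_t ≥ max{b_0, sqrt((Σ_{s=1}^t e_s − C)⁺)} for all t, where x⁺ = max(x,0). Then Σ_{t=1}^T e_t / b_t ≤ 2C/b_0 + 4 sqrt(Σ_{t=1}^T e_t). -/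
open Finset

theorem sum_err_div_b_le
    (T : ℕ) (b₀ C : ℝ) (hb₀ : 0 < b₀) (hC : 0 ≤ C)
    (e : ℕ → ℝ) (he : ∀ t, 0 ≤ e t)
    (b : ℕ → ℝ)
    (hb : ∀ t, 1 ≤ t → t ≤ T →
      b t ≥ max b₀ (Real.sqrt (max (∑ s ∈ Finset.Icc 1 t, e s - C) 0))) :
    ∑ t ∈ Finset.Icc 1 T, e t / b t
      ≤ 2 * C / b₀ + 4 * Real.sqrt (∑ t ∈ Finset.Icc 1 T, e t) := by
  induction T with
  | zero =>
    simp only [show Finset.Icc 1 0 = (∅ : Finset ℕ) by decide, Finset.sum_empty]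
    have : 0 ≤ Real.sqrt 0 := Real.sqrt_nonneg 0
    positivity
  | succ T ih =>
    have hS : ∀ t, (0:ℝ) ≤ ∑ s ∈ Finset.Icc 1 t, e s :=
      fun t => Finset.sum_nonneg fun i _ => he i
    have hsplit : ∑ t ∈ Finset.Icc 1 (T+1), e t / b t
        = (∑ t ∈ Finset.Icc 1 T, e t / b t) + e (T+1) / b (T+1) :=
      Finset.sum_Icc_succ_top (by omega) _
    have hSsplit : ∑ s ∈ Finset.Icc 1 (T+1), e s
        = (∑ s ∈ Finset.Icc 1 T, e s) + e (T+1) :=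
      Finset.sum_Icc_succ_top (by omega) _
    set S' : ℝ := ∑ s ∈ Finset.Icc 1 T, e s with hS'
    set S : ℝ := ∑ s ∈ Finset.Icc 1 (T+1), e s with hSdef
    have hbge : ∀ t, 1 ≤ t → t ≤ T + 1 → b₀ ≤ b t := fun t h1 h2 =>
      le_trans (le_max_left _ _) (hb t h1 h2)
    by_cases hcase : S ≤ 2 * C
    · -- all partial sums small: bound by 2C/b₀
      have h1 : ∑ t ∈ Finset.Icc 1 (T+1), e t / b t
          ≤ ∑ t ∈ Finset.Icc 1 (T+1), e t / b₀ := by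
        apply Finset.sum_le_sum
        intro i hi
        simp only [Finset.mem_Icc] at hi
        gcongr
        · exact he i
        · exact hbge i hi.1 hi.2
      have h2 : ∑ t ∈ Finset.Icc 1 (T+1), e t / b₀ = S / b₀ := by
        rw [← Finset.sum_div]
      have h3 : S / b₀ ≤ 2 * C / b₀ := by gcongr
      have h4 : 0 ≤ Real.sqrt S := Real.sqrt_nonneg _
      calc ∑ t ∈ Finset.Icc 1 (T+1), e t / b t ≤ S / b₀ := by rw [← h2]; exact h1
        _ ≤ 2 * C / b₀ + 4 * Real.sqrt S := by linarith
    · push_neg at hcase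
      have hSpos : 0 < S := lt_of_le_of_lt (by linarith) hcase
      have hb1 : b (T+1) ≥ Real.sqrt (max (S - C) 0) := by
        have := hb (T+1) (by omega) le_rfl
        exact le_trans (le_max_right _ _) this
      have hmax : max (S - C) 0 = S - C := max_eq_left (by linarith)
      rw [hmax] at hb1
      have hbpos : 0 < b (T+1) := lt_of_lt_of_le hb₀ (hbge (T+1) (by omega) le_rfl)
      -- √S ≤ 2 * b(T+1)
      have hkey : Real.sqrt S ≤ 2 * b (T+1) := by
        have h1 : S ≤ 4 * (S - C) := by linarith
        have h2 : Real.sqrt S ≤ Real.sqrt (4 * (S - C)) := Real.sqrt_le_sqrt h1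
        have h3 : Real.sqrt (4 * (S - C)) = 2 * Real.sqrt (S - C) := by
          rw [show (4:ℝ) = 2^2 by norm_num, Real.sqrt_mul (by positivity),
            Real.sqrt_sq (by norm_num : (0:ℝ) ≤ 2)]
        rw [h3] at h2
        linarith [hb1]
      have hsqrtpos : 0 < Real.sqrt S := Real.sqrt_pos.mpr hSpos
      have hstep1 : e (T+1) / b (T+1) ≤ 2 * e (T+1) / Real.sqrt S := by
        rw [show 2 * e (T+1) / Real.sqrt S = e (T+1) / (Real.sqrt S / 2) by
          field_simp]
        gcongr <;> first | exact he _ | linarith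
      have hS'le : S' ≤ S := by
        have := he (T+1); rw [hSsplit]; linarith
      have hstep2 : 2 * e (T+1) / Real.sqrt S
          ≤ 4 * (Real.sqrt S - Real.sqrt S') := by
        rw [div_le_iff₀ hsqrtpos]
        have hy : Real.sqrt S ^ 2 = S := Real.sq_sqrt hSpos.le
        have hx : Real.sqrt S' ^ 2 = S' := Real.sq_sqrt (hS T)
        have hxy : Real.sqrt S' ≤ Real.sqrt S := Real.sqrt_le_sqrt hS'le
        have heq : e (T+1) = S - S' := by rw [hSsplit]; ring
        nlinarith [sq_nonneg (Real.sqrt S - Real.sqrt S'), Real.sqrt_nonneg S']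
      have hih : ∑ t ∈ Finset.Icc 1 T, e t / b t
          ≤ 2 * C / b₀ + 4 * Real.sqrt S' :=
        ih fun t h1 h2 => hb t h1 (by omega)
      rw [hsplit]
      have := le_trans hstep1 hstep2
      linarith
end
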